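/- arXiv:2303.14689 — 2 statements merged into one kernel-verified Lean document; each statement's English description precedes it below -/
import Mathlib

section
/- Let λ ∈ (0,1) and θ₁, θ₂ ∈ [0,1) with max{θ₁, θ₂} > 0. Then the inequality is strict: λ·( (1/2)(θ₁+θ₂)·artanh( λ(θ₁+θ₂)/(1+λθ₁θ₂) ) + (1/2)(θ₁−θ₂)·artanh( λ(θ₁−θ₂)/(1−λθ₁θ₂) ) ) < λ²·( θ₁·artanh(θ₁) + θ₂·artanh(θ₂) ). -/
/-!
Put `c₊ = λ(1 + θ₂)/(1 + λθ₂)` and `c₋ = λ(1 - θ₂)/(1 - λθ₂)`, and symmetrically with the roles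
of `θ₁, θ₂` exchanged. Every `artanh` involved is half a difference of logarithms of the four
numbers `1 - λ + λ(1 ± θ₁)(1 ± θ₂)`, and regrouping these logarithms rewrites the left-hand side as
`(λ/2)·[θ₁(artanh(c₊θ₁) + artanh(c₋θ₁)) + θ₂(…)]`. Now `c₊, c₋ ∈ (0,1)` with `c₊ + c₋ ≤ 2λ`, and
`artanh` is strictly convex on `[0,1)` with `artanh 0 = 0`, so `artanh(cx) < c·artanh x`; hence each
bracket is at most `2λ·artanh θᵢ`, strictly so when `θᵢ > 0`.
-/

/-- The real inverse hyperbolic tangent, `artanh x = ½ · log((1+x)/(1−x))`. -/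
noncomputable def artanh (x : ℝ) : ℝ := (1 / 2) * Real.log ((1 + x) / (1 - x))

open Set

lemma hasDerivAt_artanh {x : ℝ} (hx : x ∈ Ioo (-1) 1) : HasDerivAt artanh (1 - x ^ 2)⁻¹ x := by
  obtain ⟨hx₀, hx₁⟩ := hx
  have hsub : 1 - x ≠ 0 := by linarith
  have hquot : HasDerivAt (fun y => (1 + y) / (1 - y))
      ((1 * (1 - x) - (1 + x) * (-1)) / (1 - x) ^ 2) x :=
    ((hasDerivAt_id x).const_add 1).div ((hasDerivAt_id x).const_sub 1) hsub
  refine ((hquot.log (div_pos (by linarith) (by linarith)).ne').const_mul (1 / 2 : ℝ)).congr_deriv ?_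
  have : 1 - x ^ 2 ≠ 0 := by nlinarith
  have : 1 + x ≠ 0 := by linarith
  field_simp
  ring

lemma strictConvexOn_artanh : StrictConvexOn ℝ (Ico 0 1) artanh := by
  have hderiv : ∀ x ∈ Ioo (0 : ℝ) 1, deriv artanh x = (1 - x ^ 2)⁻¹ := fun x hx =>
    (hasDerivAt_artanh ⟨by linarith [hx.1], hx.2⟩).deriv
  refine StrictMonoOn.strictConvexOn_of_deriv (convex_Ico 0 1) ?_ ?_
  · exact fun x hx => (hasDerivAt_artanh ⟨by linarith [hx.1], hx.2⟩).continuousAt.continuousWithinAt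
  · rw [interior_Ico]
    intro x hx y hy hxy
    rw [hderiv x hx, hderiv y hy]
    exact inv_strictAnti₀ (by nlinarith [hy.1, hy.2]) (by nlinarith [hx.1, hy.1])

lemma artanh_mul_lt {c x : ℝ} (hc : c ∈ Ioo 0 1) (hx : x ∈ Ioo 0 1) :
    artanh (c * x) < c * artanh x := by
  have := strictConvexOn_artanh.2 (Ioo_subset_Ico_self hx) (left_mem_Ico.2 one_pos) hx.1.ne'
    hc.1 (sub_pos.2 hc.2) (add_sub_cancel c 1)
  simpa [artanh] using this

lemma artanh_nonneg {x : ℝ} (hx₀ : 0 ≤ x) (hx₁ : x ≤ 1) : 0 ≤ artanh x := by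
  rw [artanh, ← Real.artanh_eq_half_log ⟨by linarith, hx₁⟩]
  exact Real.artanh_nonneg hx₀

lemma artanh_div_eq_of_add_of_sub {a b p q : ℝ} (hp : 0 < p) (hq : 0 < q) (hpab : b + a = p)
    (hqab : b - a = q) : artanh (a / b) = (Real.log p - Real.log q) / 2 := by
  have hb : b ≠ 0 := by linarith
  have : (1 + a / b) / (1 - a / b) = p / q := by
    rw [← hpab, ← hqab]
    field_simp
  rw [artanh, this, Real.log_div hp.ne' hq.ne']
  ring

lemma one_sub_add_mul_mul_pos {l a b : ℝ} (hl₀ : 0 ≤ l) (hl₁ : l ≤ 1) (ha : 0 < a) (hb : 0 < b) :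
    0 < 1 - l + l * a * b := by
  rcases hl₀.eq_or_lt with rfl | hl₀
  · norm_num
  · nlinarith [mul_pos hl₀ (mul_pos ha hb)]

lemma artanh_decomposition {l u v : ℝ} (hl₀ : 0 ≤ l) (hl₁ : l ≤ 1) (hu : u ∈ Ioo (-1) 1)
    (hv : v ∈ Ioo (-1) 1) :
    (u + v) * artanh (l * (u + v) / (1 + l * u * v))
        + (u - v) * artanh (l * (u - v) / (1 - l * u * v))
      = u * (artanh (l * (1 + v) / (1 + l * v) * u) + artanh (l * (1 - v) / (1 - l * v) * u))
        + v * (artanh (l * (1 + u) / (1 + l * u) * v) + artanh (l * (1 - u) / (1 - l * u) * v)) := by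
  have hup : 0 < 1 + u := by linarith [hu.1]
  have hum : 0 < 1 - u := by linarith [hu.2]
  have hvp : 0 < 1 + v := by linarith [hv.1]
  have hvm : 0 < 1 - v := by linarith [hv.2]
  have hpp := one_sub_add_mul_mul_pos hl₀ hl₁ hup hvp
  have hpm := one_sub_add_mul_mul_pos hl₀ hl₁ hup hvm
  have hmp := one_sub_add_mul_mul_pos hl₀ hl₁ hum hvp
  have hmm := one_sub_add_mul_mul_pos hl₀ hl₁ hum hvm
  simp only [div_mul_eq_mul_div]
  rw [artanh_div_eq_of_add_of_sub hpp hmm (by ring) (by ring),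
    artanh_div_eq_of_add_of_sub hpm hmp (by ring) (by ring),
    artanh_div_eq_of_add_of_sub hpp hmp (by ring) (by ring),
    artanh_div_eq_of_add_of_sub hpm hmm (by ring) (by ring),
    artanh_div_eq_of_add_of_sub hpp hpm (by ring) (by ring),
    artanh_div_eq_of_add_of_sub hmp hmm (by ring) (by ring)]
  ring

lemma artanh_mul_add_artanh_mul_lt {l u v : ℝ} (hl : l ∈ Ioo 0 1) (hu : u ∈ Ioo 0 1)
    (hv : v ∈ Ioo (-1) 1) :
    artanh (l * (1 + v) / (1 + l * v) * u) + artanh (l * (1 - v) / (1 - l * v) * u)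
      < 2 * l * artanh u := by
  obtain ⟨hl₀, hl₁⟩ := hl
  obtain ⟨hv₀, hv₁⟩ := hv
  have hdp : 0 < 1 + l * v := by nlinarith
  have hdm : 0 < 1 - l * v := by nlinarith
  set cp := l * (1 + v) / (1 + l * v)
  set cm := l * (1 - v) / (1 - l * v)
  have hcp : cp ∈ Ioo 0 1 :=
    ⟨div_pos (by nlinarith) hdp, (div_lt_one hdp).2 (by nlinarith)⟩
  have hcm : cm ∈ Ioo 0 1 :=
    ⟨div_pos (by nlinarith) hdm, (div_lt_one hdm).2 (by nlinarith)⟩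
  have hsum : cp + cm ≤ 2 * l := by
    rw [div_add_div _ _ hdp.ne' hdm.ne', div_le_iff₀ (by positivity)]
    nlinarith [mul_nonneg (mul_nonneg hl₀.le (sub_nonneg.2 hl₁.le)) (sq_nonneg v)]
  calc artanh (cp * u) + artanh (cm * u)
      < cp * artanh u + cm * artanh u := add_lt_add (artanh_mul_lt hcp hu) (artanh_mul_lt hcm hu)
    _ = (cp + cm) * artanh u := by ring
    _ ≤ 2 * l * artanh u := mul_le_mul_of_nonneg_right hsum (artanh_nonneg hu.1.le hu.2.le)

lemma artanh_mul_add_artanh_mul_le {l u v : ℝ} (hl : l ∈ Ioo 0 1) (hu : u ∈ Ico 0 1)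
    (hv : v ∈ Ioo (-1) 1) :
    artanh (l * (1 + v) / (1 + l * v) * u) + artanh (l * (1 - v) / (1 - l * v) * u)
      ≤ 2 * l * artanh u := by
  rcases hu.1.eq_or_lt with rfl | hu₀
  · simp [artanh]
  · exact (artanh_mul_add_artanh_mul_lt hl ⟨hu₀, hu.2⟩ hv).le

/-- Strictness claim of Lemma B.1 (SKL contraction for `r = 3`): for `λ ∈ (0,1)` and
`θ₁, θ₂ ∈ [0,1)` with `max{θ₁,θ₂} > 0`, the contraction inequality is strict. -/
theorem stmt3 (lam θ₁ θ₂ : ℝ) (hlam : lam ∈ Set.Ioo (0 : ℝ) 1)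
    (hθ₁ : θ₁ ∈ Set.Ico (0 : ℝ) 1) (hθ₂ : θ₂ ∈ Set.Ico (0 : ℝ) 1)
    (hmax : 0 < max θ₁ θ₂) :
    lam * ((1 / 2) * (θ₁ + θ₂) * artanh (lam * (θ₁ + θ₂) / (1 + lam * θ₁ * θ₂))
        + (1 / 2) * (θ₁ - θ₂) * artanh (lam * (θ₁ - θ₂) / (1 - lam * θ₁ * θ₂)))
      < lam ^ 2 * (θ₁ * artanh θ₁ + θ₂ * artanh θ₂) := by
  have hθ₁' : θ₁ ∈ Ioo (-1) 1 := ⟨by linarith [hθ₁.1], hθ₁.2⟩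
  have hθ₂' : θ₂ ∈ Ioo (-1) 1 := ⟨by linarith [hθ₂.1], hθ₂.2⟩
  have key : (θ₁ + θ₂) * artanh (lam * (θ₁ + θ₂) / (1 + lam * θ₁ * θ₂))
        + (θ₁ - θ₂) * artanh (lam * (θ₁ - θ₂) / (1 - lam * θ₁ * θ₂))
      < 2 * lam * (θ₁ * artanh θ₁ + θ₂ * artanh θ₂) := by
    rw [artanh_decomposition hlam.1.le hlam.2.le hθ₁' hθ₂']
    have h₁ := mul_le_mul_of_nonneg_left (artanh_mul_add_artanh_mul_le hlam hθ₁ hθ₂') hθ₁.1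
    have h₂ := mul_le_mul_of_nonneg_left (artanh_mul_add_artanh_mul_le hlam hθ₂ hθ₁') hθ₂.1
    rcases lt_max_iff.mp hmax with h | h
    · have := mul_lt_mul_of_pos_left (artanh_mul_add_artanh_mul_lt hlam ⟨h, hθ₁.2⟩ hθ₂') h
      linarith
    · have := mul_lt_mul_of_pos_left (artanh_mul_add_artanh_mul_lt hlam ⟨h, hθ₂.2⟩ hθ₁') h
      linarith
  have := mul_lt_mul_of_pos_left key (half_pos hlam.1)
  linarith
end

section
/- Let λ ∈ (0,1) and θ₁, θ₂, θ₃ ∈ [0,1) with max{θ₁, θ₂, θ₃} > 0. For signs s₂, s₃ ∈ {−1, +1}, write N(s₂,s₃) = θ₁ + s₂θ₂ + s₃θ₃ + s₂s₃·θ₁θ₂θ₃ and D(s₂,s₃) = 1 + λ·( s₂θ₁θ₂ + s₂s₃θ₂θ₃ + s₃θ₃θ₁ ). Then the inequality is strict: (1/4)·Σ_{s₂,s₃ ∈ {−1,+1}} N(s₂,s₃)·artanh( λ·N(s₂,s₃) / D(s₂,s₃) ) < λ·( θ₁·artanh(θ₁) + θ₂·artanh(θ₂) + θ₃·artanh(θ₃)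 ). -/
/-- Numerator `N(s₂,s₃) = θ₁ + s₂θ₂ + s₃θ₃ + s₂s₃·θ₁θ₂θ₃`. -/
def N (θ₁ θ₂ θ₃ s₂ s₃ : ℝ) : ℝ := θ₁ + s₂ * θ₂ + s₃ * θ₃ + s₂ * s₃ * (θ₁ * θ₂ * θ₃)

/-- Denominator `D(s₂,s₃) = 1 + λ·(s₂θ₁θ₂ + s₂s₃θ₂θ₃ + s₃θ₃θ₁)`. -/
def D (lam θ₁ θ₂ θ₃ s₂ s₃ : ℝ) : ℝ :=
  1 + lam * (s₂ * (θ₁ * θ₂) + s₂ * s₃ * (θ₂ * θ₃) + s₃ * (θ₃ * θ₁))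

/-!
Put `tᵢ = artanh θᵢ`, `C = cosh t₁ cosh t₂ cosh t₃` and `x = t₁ + s₂t₂ + s₃t₃`. The addition
formulas give `sinh x = C·N` and `cosh x = C·D|_{λ=1}`, so `λN/D = λ sinh x / ((1-λ)C + λ cosh x)`.
For `x > 0` this is `< tanh(λx)`, because
`λ sinh((1-λ)x) ≤ λ(1-λ) sinh x ≤ λ(1-λ) x C < (1-λ) C sinh(λx)`;
the middle step `sinh x ≤ x C` reduces, by `sinh (a u) ≤ a sinh u` for `a ∈ [0, 1]` and
`|x| ≤ t₁ + t₂ + t₃`, to `θ₁ + θ₂ + θ₃ + θ₁θ₂θ₃ ≤ t₁ + t₂ + t₃`, which follows from `artanh θ ≥ θ + θ³/3` and AM-GM.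
By oddness, every term satisfies `N·artanh(λN/D) ≤ λ N x`, strictly when `x ≠ 0` (as for
`s₂ = s₃ = 1`), and `∑ N x = 4 ∑ θᵢ tᵢ`.
-/

open Real hiding artanh artanh_neg tanh_artanh

lemma artanh_eq_real_artanh {x : ℝ} (hx : x ∈ Set.Icc (-1) 1) : artanh x = Real.artanh x :=
  (Real.artanh_eq_half_log hx).symm

lemma artanh_neg (x : ℝ) : artanh (-x) = -artanh x := by
  rw [artanh, artanh, show (1 + -x) / (1 - -x) = ((1 + x) / (1 - x))⁻¹ by rw [inv_div]; ring,
    Real.log_inv]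
  ring

lemma tanh_artanh {x : ℝ} (hx : x ∈ Set.Ioo (-1) 1) : tanh (artanh x) = x := by
  rw [artanh_eq_real_artanh (Set.Ioo_subset_Icc_self hx), Real.tanh_artanh hx]

lemma artanh_lt_of_lt_tanh {x y : ℝ} (hx : -1 < x) (h : x < tanh y) : artanh x < y := by
  rw [artanh_eq_real_artanh ⟨hx.le, (h.trans (tanh_lt_one y)).le⟩]
  simpa only [Real.artanh_tanh] using Real.artanh_lt_artanh hx (tanh_lt_one y) h

lemma tanh_nonneg {t : ℝ} (ht : 0 ≤ t) : 0 ≤ tanh t := by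
  rw [Real.tanh_eq_sinh_div_cosh]
  exact div_nonneg (Real.sinh_nonneg_iff.mpr ht) (cosh_pos t).le

lemma tanh_sign_mul {s : ℝ} (hs : s ∈ ({-1, 1} : Finset ℝ)) (t : ℝ) :
    tanh (s * t) = s * tanh t := by
  obtain rfl | rfl : s = -1 ∨ s = 1 := by simpa using hs
  all_goals simp [Real.tanh_neg]

/-- The first two terms of the series `artanh x = ∑ x ^ (2k+1) / (2k+1)`. -/
lemma add_pow_three_div_le_artanh {x : ℝ} (hx₀ : 0 ≤ x) (hx₁ : x < 1) :
    x + x ^ 3 / 3 ≤ Real.artanh x := by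
  have hseries := Real.hasSum_log_sub_log_of_abs_lt_one (abs_lt.mpr ⟨by linarith, hx₁⟩)
  have h := sum_le_hasSum (Finset.range 2) (fun k _ ↦ by positivity) hseries
  rw [Real.artanh_eq_half_log ⟨by linarith, hx₁.le⟩, Real.log_div (by linarith) (by linarith)]
  norm_num [Finset.sum_range_succ] at h
  linarith

lemma le_artanh {x : ℝ} (hx₀ : 0 ≤ x) (hx₁ : x < 1) : x ≤ artanh x := by
  rw [artanh_eq_real_artanh ⟨by linarith, hx₁.le⟩]
  linarith [add_pow_three_div_le_artanh hx₀ hx₁, pow_nonneg hx₀ 3]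

lemma tanh_add_pow_three_div_le {t : ℝ} (ht : 0 ≤ t) : tanh t + tanh t ^ 3 / 3 ≤ t := by
  simpa only [Real.artanh_tanh] using
    add_pow_three_div_le_artanh (tanh_nonneg ht) (tanh_lt_one t)

/-- Termwise comparison of the power series of `sinh`. -/
lemma sinh_mul_le_mul_sinh {a u : ℝ} (ha₀ : 0 ≤ a) (ha₁ : a ≤ 1) (hu : 0 ≤ u) :
    sinh (a * u) ≤ a * sinh u := by
  refine hasSum_le (fun n ↦ ?_) (Real.hasSum_sinh (a * u)) ((Real.hasSum_sinh u).mul_left a)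
  rw [mul_pow, mul_div_assoc]
  gcongr
  exact pow_le_of_le_one ha₀ ha₁ (by omega)

lemma sinh_le_mul_of_le {u T C : ℝ} (hu : 0 ≤ u) (huT : u ≤ T) (hT : sinh T ≤ T * C) :
    sinh u ≤ u * C := by
  rcases (hu.trans huT).eq_or_lt with rfl | hT₀
  · simp [le_antisymm huT hu]
  calc sinh u = sinh (u / T * T) := by rw [div_mul_cancel₀ u hT₀.ne']
    _ ≤ u / T * sinh T := sinh_mul_le_mul_sinh (by positivity) ((div_le_one hT₀).mpr huT) hT₀.le
    _ ≤ u / T * (T * C) := by gcongr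
    _ = u * C := by field_simp

lemma sinh_add_add_eq_mul_N (a b c : ℝ) :
    sinh (a + b + c) = cosh a * cosh b * cosh c * N (tanh a) (tanh b) (tanh c) 1 1 := by
  simp only [N, Real.sinh_add, Real.cosh_add, Real.tanh_eq_sinh_div_cosh]
  field_simp
  ring

lemma cosh_add_add_eq_mul_D (a b c : ℝ) :
    cosh (a + b + c) = cosh a * cosh b * cosh c * D 1 (tanh a) (tanh b) (tanh c) 1 1 := by
  simp only [D, Real.sinh_add, Real.cosh_add, Real.tanh_eq_sinh_div_cosh]
  field_simp
  ring

lemma N_tanh_le_add_add {a b c : ℝ} (ha : 0 ≤ a) (hb : 0 ≤ b) (hc : 0 ≤ c) :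
    N (tanh a) (tanh b) (tanh c) 1 1 ≤ a + b + c := by
  have hu := tanh_nonneg ha
  have hv := tanh_nonneg hb
  have hw := tanh_nonneg hc
  have amgm : 3 * (tanh a * tanh b * tanh c) ≤ tanh a ^ 3 + tanh b ^ 3 + tanh c ^ 3 := by
    nlinarith [mul_nonneg (add_nonneg (add_nonneg hu hv) hw) (add_nonneg (add_nonneg
      (sq_nonneg (tanh a - tanh b)) (sq_nonneg (tanh b - tanh c))) (sq_nonneg (tanh a - tanh c)))]
  simp only [N]
  linarith [tanh_add_pow_three_div_le ha, tanh_add_pow_three_div_le hb,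
    tanh_add_pow_three_div_le hc]

lemma sinh_abs_add_add_le (a b c : ℝ) :
    sinh |a + b + c| ≤ |a + b + c| * (cosh a * cosh b * cosh c) := by
  have hT : sinh (|a| + |b| + |c|) ≤ (|a| + |b| + |c|) * (cosh a * cosh b * cosh c) := by
    rw [sinh_add_add_eq_mul_N, Real.cosh_abs, Real.cosh_abs, Real.cosh_abs, mul_comm _ (_ * _)]
    gcongr
    exact N_tanh_le_add_add (abs_nonneg a) (abs_nonneg b) (abs_nonneg c)
  exact sinh_le_mul_of_le (abs_nonneg _) (abs_add_three a b c) hT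

section Contraction

variable {lam : ℝ}

lemma div_lt_tanh_mul {C x : ℝ} (hlam₀ : 0 < lam) (hlam₁ : lam < 1) (hC : 0 < C) (hx : 0 < x)
    (hsinh : sinh x ≤ x * C) :
    lam * sinh x / ((1 - lam) * C + lam * cosh x) < tanh (lam * x) := by
  have hlam' : 0 < 1 - lam := by linarith
  have hden : 0 < (1 - lam) * C + lam * cosh x := by
    have := cosh_pos x
    positivity
  rw [Real.tanh_eq_sinh_div_cosh, div_lt_div_iff₀ hden (cosh_pos _)]
  have hshrink : sinh ((1 - lam) * x) ≤ (1 - lam) * (x * C) :=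
    (sinh_mul_le_mul_sinh hlam'.le (by linarith) hx.le).trans (by gcongr)
  have hgrow : lam * x < sinh (lam * x) := Real.self_lt_sinh_iff.mpr (by positivity)
  calc lam * sinh x * cosh (lam * x)
      = lam * sinh ((1 - lam) * x) + lam * cosh x * sinh (lam * x) := by
        rw [show (1 - lam) * x = x - lam * x by ring, Real.sinh_sub]; ring
    _ ≤ (1 - lam) * C * (lam * x) + lam * cosh x * sinh (lam * x) := by nlinarith
    _ < (1 - lam) * C * sinh (lam * x) + lam * cosh x * sinh (lam * x) := by gcongr
    _ = sinh (lam * x) * ((1 - lam) * C + lam * cosh x) := by ring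

lemma sinh_mul_artanh_lt {C x : ℝ} (hlam₀ : 0 < lam) (hlam₁ : lam < 1) (hC : 0 < C)
    (hx : x ≠ 0) (hsinh : sinh |x| ≤ |x| * C) :
    sinh x * artanh (lam * sinh x / ((1 - lam) * C + lam * cosh x)) < lam * x * sinh x := by
  wlog hpos : 0 < x generalizing x
  · -- both sides are even in `x`
    have h := this (neg_ne_zero.mpr hx) (by rwa [abs_neg])
      (by linarith [hx.lt_or_gt.resolve_right hpos])
    rw [Real.sinh_neg, Real.cosh_neg, mul_neg, neg_div, artanh_neg] at h
    linarith
  have hs : 0 < sinh x := Real.sinh_pos_iff.mpr hpos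
  have hq : 0 ≤ lam * sinh x / ((1 - lam) * C + lam * cosh x) := by
    have := cosh_pos x
    have : 0 < 1 - lam := by linarith
    positivity
  rw [abs_of_pos hpos] at hsinh
  have h := artanh_lt_of_lt_tanh (by linarith) (div_lt_tanh_mul hlam₀ hlam₁ hC hpos hsinh)
  nlinarith

lemma D_eq_one_sub_add_mul (lam u v w : ℝ) :
    D lam u v w 1 1 = 1 - lam + lam * D 1 u v w 1 1 := by
  simp only [D]; ring

lemma N_tanh_mul_artanh_lt (hlam₀ : 0 < lam) (hlam₁ : lam < 1) {a b c : ℝ}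
    (hx : a + b + c ≠ 0) :
    N (tanh a) (tanh b) (tanh c) 1 1 *
        artanh (lam * N (tanh a) (tanh b) (tanh c) 1 1 / D lam (tanh a) (tanh b) (tanh c) 1 1)
      < lam * (N (tanh a) (tanh b) (tanh c) 1 1 * (a + b + c)) := by
  obtain ⟨C, hC, hsinh, hcosh, hbound⟩ : ∃ C > 0,
      sinh (a + b + c) = C * N (tanh a) (tanh b) (tanh c) 1 1 ∧
      cosh (a + b + c) = C * D 1 (tanh a) (tanh b) (tanh c) 1 1 ∧
      sinh |a + b + c| ≤ |a + b + c| * C := by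
    have := cosh_pos a; have := cosh_pos b; have := cosh_pos c
    exact ⟨_, by positivity, sinh_add_add_eq_mul_N a b c, cosh_add_add_eq_mul_D a b c,
      sinh_abs_add_add_le a b c⟩
  have hN : N (tanh a) (tanh b) (tanh c) 1 1 = sinh (a + b + c) / C := by
    rw [hsinh]; field_simp
  have hq : lam * N (tanh a) (tanh b) (tanh c) 1 1 / D lam (tanh a) (tanh b) (tanh c) 1 1
      = lam * sinh (a + b + c) / ((1 - lam) * C + lam * cosh (a + b + c)) := by
    rw [D_eq_one_sub_add_mul, hsinh, hcosh]; field_simp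
  rw [hq, hN, div_mul_eq_mul_div, div_lt_iff₀ hC]
  calc _ < lam * (a + b + c) * sinh (a + b + c) := sinh_mul_artanh_lt hlam₀ hlam₁ hC hx hbound
    _ = _ := by field_simp

lemma N_tanh_mul_artanh_le (hlam₀ : 0 < lam) (hlam₁ : lam < 1) (a b c : ℝ) :
    N (tanh a) (tanh b) (tanh c) 1 1 *
        artanh (lam * N (tanh a) (tanh b) (tanh c) 1 1 / D lam (tanh a) (tanh b) (tanh c) 1 1)
      ≤ lam * (N (tanh a) (tanh b) (tanh c) 1 1 * (a + b + c)) := by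
  rcases eq_or_ne (a + b + c) 0 with hx | hx
  · have hN : N (tanh a) (tanh b) (tanh c) 1 1 = 0 := by
      have h := sinh_add_add_eq_mul_N a b c
      have := cosh_pos a; have := cosh_pos b; have := cosh_pos c
      rw [hx, Real.sinh_zero, eq_comm, mul_eq_zero] at h
      exact h.resolve_left (by positivity)
    simp [hN]
  · exact (N_tanh_mul_artanh_lt hlam₀ hlam₁ hx).le

end Contraction

section Signs

variable {θ₁ θ₂ θ₃ s₂ s₃ : ℝ}

lemma N_eq_N_tanh_artanh (hθ₁ : θ₁ ∈ Set.Ioo (-1) 1) (hθ₂ : θ₂ ∈ Set.Ioo (-1) 1)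
    (hθ₃ : θ₃ ∈ Set.Ioo (-1) 1) (hs₂ : s₂ ∈ ({-1, 1} : Finset ℝ))
    (hs₃ : s₃ ∈ ({-1, 1} : Finset ℝ)) :
    N θ₁ θ₂ θ₃ s₂ s₃
      = N (tanh (artanh θ₁)) (tanh (s₂ * artanh θ₂)) (tanh (s₃ * artanh θ₃)) 1 1 := by
  rw [tanh_sign_mul hs₂, tanh_sign_mul hs₃, tanh_artanh hθ₁, tanh_artanh hθ₂, tanh_artanh hθ₃]
  simp only [N]; ring

lemma D_eq_D_tanh_artanh (lam : ℝ) (hθ₁ : θ₁ ∈ Set.Ioo (-1) 1) (hθ₂ : θ₂ ∈ Set.Ioo (-1) 1)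
    (hθ₃ : θ₃ ∈ Set.Ioo (-1) 1) (hs₂ : s₂ ∈ ({-1, 1} : Finset ℝ))
    (hs₃ : s₃ ∈ ({-1, 1} : Finset ℝ)) :
    D lam θ₁ θ₂ θ₃ s₂ s₃
      = D lam (tanh (artanh θ₁)) (tanh (s₂ * artanh θ₂)) (tanh (s₃ * artanh θ₃)) 1 1 := by
  rw [tanh_sign_mul hs₂, tanh_sign_mul hs₃, tanh_artanh hθ₁, tanh_artanh hθ₂, tanh_artanh hθ₃]
  simp only [D]; ring

lemma N_mul_artanh_le {lam : ℝ} (hlam₀ : 0 < lam) (hlam₁ : lam < 1)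
    (hθ₁ : θ₁ ∈ Set.Ioo (-1) 1) (hθ₂ : θ₂ ∈ Set.Ioo (-1) 1) (hθ₃ : θ₃ ∈ Set.Ioo (-1) 1)
    (hs₂ : s₂ ∈ ({-1, 1} : Finset ℝ)) (hs₃ : s₃ ∈ ({-1, 1} : Finset ℝ)) :
    N θ₁ θ₂ θ₃ s₂ s₃ * artanh (lam * N θ₁ θ₂ θ₃ s₂ s₃ / D lam θ₁ θ₂ θ₃ s₂ s₃)
      ≤ lam * (N θ₁ θ₂ θ₃ s₂ s₃ * (artanh θ₁ + s₂ * artanh θ₂ + s₃ * artanh θ₃)) := by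
  rw [N_eq_N_tanh_artanh hθ₁ hθ₂ hθ₃ hs₂ hs₃, D_eq_D_tanh_artanh lam hθ₁ hθ₂ hθ₃ hs₂ hs₃]
  exact N_tanh_mul_artanh_le hlam₀ hlam₁ _ _ _

lemma N_mul_artanh_lt {lam : ℝ} (hlam₀ : 0 < lam) (hlam₁ : lam < 1)
    (hθ₁ : θ₁ ∈ Set.Ioo (-1) 1) (hθ₂ : θ₂ ∈ Set.Ioo (-1) 1) (hθ₃ : θ₃ ∈ Set.Ioo (-1) 1)
    (hs₂ : s₂ ∈ ({-1, 1} : Finset ℝ)) (hs₃ : s₃ ∈ ({-1, 1} : Finset ℝ))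
    (hx : artanh θ₁ + s₂ * artanh θ₂ + s₃ * artanh θ₃ ≠ 0) :
    N θ₁ θ₂ θ₃ s₂ s₃ * artanh (lam * N θ₁ θ₂ θ₃ s₂ s₃ / D lam θ₁ θ₂ θ₃ s₂ s₃)
      < lam * (N θ₁ θ₂ θ₃ s₂ s₃ * (artanh θ₁ + s₂ * artanh θ₂ + s₃ * artanh θ₃)) := by
  rw [N_eq_N_tanh_artanh hθ₁ hθ₂ hθ₃ hs₂ hs₃, D_eq_D_tanh_artanh lam hθ₁ hθ₂ hθ₃ hs₂ hs₃]
  exact N_tanh_mul_artanh_lt hlam₀ hlam₁ hx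

end Signs

lemma sum_signs_N_mul (θ₁ θ₂ θ₃ t₁ t₂ t₃ : ℝ) :
    ∑ s₂ ∈ ({-1, 1} : Finset ℝ), ∑ s₃ ∈ ({-1, 1} : Finset ℝ),
        N θ₁ θ₂ θ₃ s₂ s₃ * (t₁ + s₂ * t₂ + s₃ * t₃)
      = 4 * (θ₁ * t₁ + θ₂ * t₂ + θ₃ * t₃) := by
  rw [Finset.sum_pair (by norm_num), Finset.sum_pair (by norm_num), Finset.sum_pair (by norm_num)]
  simp only [N]
  ring

/-- Strictness claim of Lemma B.4 (Marwaha): for `λ ∈ (0,1)` and `θ₁, θ₂, θ₃ ∈ [0,1)`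
with `max{θ₁,θ₂,θ₃} > 0`, the `r = 4` SKL contraction inequality is strict. -/
theorem stmt5 (lam θ₁ θ₂ θ₃ : ℝ) (hlam : lam ∈ Set.Ioo (0 : ℝ) 1)
    (hθ₁ : θ₁ ∈ Set.Ico (0 : ℝ) 1) (hθ₂ : θ₂ ∈ Set.Ico (0 : ℝ) 1)
    (hθ₃ : θ₃ ∈ Set.Ico (0 : ℝ) 1) (hmax : 0 < max θ₁ (max θ₂ θ₃)) :
    (1 / 4) * ∑ s₂ ∈ ({-1, 1} : Finset ℝ), ∑ s₃ ∈ ({-1, 1} : Finset ℝ),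
        N θ₁ θ₂ θ₃ s₂ s₃ * artanh (lam * N θ₁ θ₂ θ₃ s₂ s₃ / D lam θ₁ θ₂ θ₃ s₂ s₃)
      < lam * (θ₁ * artanh θ₁ + θ₂ * artanh θ₂ + θ₃ * artanh θ₃) := by
  obtain ⟨hlam₀, hlam₁⟩ := hlam
  have hI : Set.Ico (0 : ℝ) 1 ⊆ Set.Ioo (-1) 1 := Set.Ico_subset_Ioo_left (by norm_num)
  have hterm s₂ (hs₂ : s₂ ∈ ({-1, 1} : Finset ℝ)) s₃ (hs₃ : s₃ ∈ ({-1, 1} : Finset ℝ)) :=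
    N_mul_artanh_le hlam₀ hlam₁ (hI hθ₁) (hI hθ₂) (hI hθ₃) hs₂ hs₃
  have hsum : artanh θ₁ + 1 * artanh θ₂ + 1 * artanh θ₃ ≠ 0 := by
    have : max θ₁ (max θ₂ θ₃) ≤ θ₁ + θ₂ + θ₃ := max_le (by linarith [hθ₂.1, hθ₃.1])
      (max_le (by linarith [hθ₁.1, hθ₃.1]) (by linarith [hθ₁.1, hθ₂.1]))
    linarith [le_artanh hθ₁.1 hθ₁.2, le_artanh hθ₂.1 hθ₂.2, le_artanh hθ₃.1 hθ₃.2]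
  have hterm₁ := N_mul_artanh_lt hlam₀ hlam₁ (hI hθ₁) (hI hθ₂) (hI hθ₃) (by simp) (by simp) hsum
  calc _ < (1 / 4) * ∑ s₂ ∈ ({-1, 1} : Finset ℝ), ∑ s₃ ∈ ({-1, 1} : Finset ℝ),
        lam * (N θ₁ θ₂ θ₃ s₂ s₃ * (artanh θ₁ + s₂ * artanh θ₂ + s₃ * artanh θ₃)) := by
        refine mul_lt_mul_of_pos_left ?_ (by norm_num)
        exact Finset.sum_lt_sum (fun s₂ hs₂ ↦ Finset.sum_le_sum (hterm s₂ hs₂))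
          ⟨1, by simp, Finset.sum_lt_sum (hterm 1 (by simp)) ⟨1, by simp, hterm₁⟩⟩
    _ = lam * (θ₁ * artanh θ₁ + θ₂ * artanh θ₂ + θ₃ * artanh θ₃) := by
        simp only [← Finset.mul_sum]
        rw [sum_signs_N_mul]
        ring
end
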